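/- arXiv:2409.09643 — 4 statements merged into one kernel-verified Lean document; each statement's English description precedes it below -/
import Mathlib

section
/- Let 0 ≤ t < 1 and λ a partition. The sequence a_n := v_{ℓ(λ)+n}(t) / v^{(ℓ(λ)+n)}_{λ*0^n}(t) (n ≥ 1) is monotone increasing and converges to ∏_{i≥1} (1-t)^{-1}(1-t^2)^{-1}⋯(1-t^{m_i(λ)})^{-1}, where m_i(λ) is the multiplicity of the positive part i in λ. -/
open Finset Filter

/-- `v_m(t) = ∏_{i=1}^m (1-t^i)/(1-t)`. -/
noncomputable def vR (t : ℝ) (m : ℕ) : ℝ := ∏ i ∈ Icc 1 m, (1 - t ^ i) / (1 - t)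

/-- `a_n = v_{ℓ(λ)+n}(t) / v^{(ℓ(λ)+n)}_{λ*0^n}(t)`, where the partition `λ` is encoded by
the multiset `μ` of its positive parts, and the padded multiplicity of `0` is `n`. -/
noncomputable def aSeq (t : ℝ) (μ : Multiset ℕ) (n : ℕ) : ℝ :=
  vR t (Multiset.card μ + n) / (vR t n * ∏ i ∈ μ.toFinset, vR t (μ.count i))

/-! Writing `v_m(t) = (t;t)_m / (1-t)^m` with `(t;t)_m = ∏_{j=1}^m (1-t^j)`, the powers of `1-t`
cancel in `a_n` because `ℓ(λ) = ∑ m_i(λ)`, and `(t;t)_{ℓ(λ)+n} / (t;t)_n` leaves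
`a_n = (1-t^{n+1}) ⋯ (1-t^{n+ℓ(λ)}) · ∏_i (t;t)_{m_i(λ)}⁻¹`.
For `0 ≤ t < 1` each of the `ℓ(λ)` factors `1-t^{n+j}` increases to `1`. -/

lemma one_sub_pow_pos {t : ℝ} (ht : |t| < 1) {j : ℕ} (hj : j ≠ 0) : 0 < 1 - t ^ j := by
  have : |t| ^ j < 1 := pow_lt_one₀ (abs_nonneg t) ht hj
  linarith [le_abs_self (t ^ j), abs_pow t j]

lemma prod_Icc_one_sub_pow_pos {t : ℝ} (ht : |t| < 1) (m : ℕ) : 0 < ∏ j ∈ Icc 1 m, (1 - t ^ j) :=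
  prod_pos fun _ hj => one_sub_pow_pos ht (by have := (mem_Icc.mp hj).1; omega)

lemma vR_eq_prod_div (t : ℝ) (m : ℕ) : vR t m = (∏ j ∈ Icc 1 m, (1 - t ^ j)) / (1 - t) ^ m := by
  rw [vR, prod_div_distrib, prod_const, Nat.card_Icc, Nat.add_sub_cancel]

lemma prod_Icc_one_add {M : Type*} [CommMonoid M] (f : ℕ → M) (n c : ℕ) :
    ∏ j ∈ Icc 1 (n + c), f j = (∏ j ∈ Icc 1 n, f j) * ∏ j ∈ range c, f (n + 1 + j) := by
  rw [← Ico_add_one_right_eq_Icc, ← Ico_add_one_right_eq_Icc,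
    ← prod_Ico_consecutive _ (by omega : 1 ≤ n + 1) (by omega : n + 1 ≤ n + c + 1),
    Nat.add_right_comm, prod_Ico_eq_prod_range f (n + 1), Nat.add_sub_cancel_left]

lemma aSeq_eq {t : ℝ} (ht : |t| < 1) (μ : Multiset ℕ) (n : ℕ) :
    aSeq t μ n = (∏ j ∈ range (Multiset.card μ), (1 - t ^ (n + 1 + j))) *
      ∏ i ∈ μ.toFinset, (∏ j ∈ Icc 1 (μ.count i), (1 - t ^ j))⁻¹ := by
  have hvμ : ∏ i ∈ μ.toFinset, vR t (μ.count i) =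
      (∏ i ∈ μ.toFinset, ∏ j ∈ Icc 1 (μ.count i), (1 - t ^ j)) / (1 - t) ^ Multiset.card μ := by
    simp only [vR_eq_prod_div]
    rw [prod_div_distrib, prod_pow_eq_pow_sum, Multiset.toFinset_sum_count_eq]
  have h1t : 1 - t ≠ 0 := by simpa using (one_sub_pow_pos ht one_ne_zero).ne'
  have hn := (prod_Icc_one_sub_pow_pos ht n).ne'
  have hμ := (prod_pos fun i (_ : i ∈ μ.toFinset) => prod_Icc_one_sub_pow_pos ht (μ.count i)).ne'
  rw [aSeq, hvμ, vR_eq_prod_div, vR_eq_prod_div, add_comm, prod_Icc_one_add, prod_inv_distrib]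
  field_simp
  ring

lemma monotone_prod_one_sub_pow {t : ℝ} (ht0 : 0 ≤ t) (ht1 : t ≤ 1) (c : ℕ) :
    Monotone fun n : ℕ => ∏ j ∈ range c, (1 - t ^ (n + 1 + j)) := fun a b hab =>
  prod_le_prod (fun _ _ => sub_nonneg.mpr (pow_le_one₀ ht0 ht1))
    (fun _ _ => sub_le_sub_left (pow_le_pow_of_le_one ht0 ht1 (by omega)) 1)

lemma tendsto_prod_one_sub_pow {t : ℝ} (ht : |t| < 1) (c : ℕ) :
    Tendsto (fun n : ℕ => ∏ j ∈ range c, (1 - t ^ (n + 1 + j))) atTop (nhds 1) := by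
  rw [← prod_const_one (s := range c)]
  refine tendsto_finsetProd _ fun j _ => ?_
  have : Tendsto (fun n : ℕ => t ^ (n + 1 + j)) atTop (nhds 0) :=
    ((tendsto_pow_atTop_nhds_zero_of_abs_lt_one ht).comp (tendsto_add_atTop_nat (1 + j))).congr
      fun n => by simp [add_assoc]
  simpa using this.const_sub 1

theorem stmt1_general (t : ℝ) (ht0 : 0 ≤ t) (ht1 : t < 1)
    (μ : Multiset ℕ) :
    Monotone (fun n : ℕ => aSeq t μ (n + 1)) ∧
      Tendsto (fun n : ℕ => aSeq t μ (n + 1)) atTop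
        (nhds (∏ i ∈ μ.toFinset, (∏ j ∈ Icc 1 (μ.count i), (1 - t ^ j))⁻¹)) := by
  have ht : |t| < 1 := abs_lt.mpr ⟨by linarith, ht1⟩
  set L := ∏ i ∈ μ.toFinset, (∏ j ∈ Icc 1 (μ.count i), (1 - t ^ j))⁻¹
  have hL : 0 ≤ L := prod_nonneg fun i _ => (inv_pos.mpr (prod_Icc_one_sub_pow_pos ht _)).le
  simp only [aSeq_eq ht]
  refine ⟨((monotone_prod_one_sub_pow ht0 ht1.le _).comp fun a b h => by omega).mul_const hL, ?_⟩
  simpa only [Function.comp_def, one_mul] using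
    ((tendsto_prod_one_sub_pow ht _).comp (tendsto_add_atTop_nat 1)).mul_const L

theorem stmt1 (t : ℝ) (ht0 : 0 ≤ t) (ht1 : t < 1)
    (μ : Multiset ℕ) (hpos : ∀ x ∈ μ, 0 < x) :
    Monotone (fun n : ℕ => aSeq t μ (n + 1)) ∧
      Tendsto (fun n : ℕ => aSeq t μ (n + 1)) atTop
        (nhds (∏ i ∈ μ.toFinset, (∏ j ∈ Icc 1 (μ.count i), (1 - t ^ j))⁻¹)) :=
  stmt1_general t ht0 ht1 μ
end

section
/- For any t with |t| < 1 (or as formal power series in t) and any m ≥ 0, one has (1-t)^{-1}(1-t^2)^{-1}⋯(1-t^m)^{-1} = ∑_{λ ⊢ m} t^{2n(λ)} / b_λ(t), where the sum is over all partitions λ of m, n(λ) = ∑_{i≥1} (i-1)λ_i, and b_λ(t) = ∏_{i≥1} (1-t)(1-t^2)⋯(1-t^{m_i(λ)}). -/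
/-!
Removing the first column of a partition `λ ⊢ k` with `b` parts leaves `μ ⊢ k - b` with at most
`b` parts, and `t^(2n(λ)) / b_λ = t^(b(b-1)) · t^(2n(μ)) / (b_μ · (t;t)_(b-ℓ(μ)))`: indeed
`2n(λ) + |λ| = ∑_{i,j} min(λ_i, λ_j)`, and the multiplicities of `λ` are those of `μ` shifted by
one together with `m_1(λ) = b - ℓ(μ)`. Hence
`F_a(k) = (t;t)_a ∑_{μ ⊢ k, ℓ(μ) ≤ a} t^(2n(μ)) / (b_μ · (t;t)_(a-ℓ(μ)))` satisfies
`F_a(k) = ∑_b [a, b] t^(b(b-1)) F_b(k - b)`, which the `q`-Vandermonde identity solves as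
`F_a(k) = [a+k-1, k]`, and then `∑_{λ ⊢ m} t^(2n(λ)) / b_λ = ∑_b t^(b(b-1)) [m-1, b-1] / (t;t)_b`,
which equals `1 / (t;t)_m`. Both summation identities are instances of one transform:
`g y r = ∑_c q^(c(c+r)) [y, c] g 0 (c+r)` whenever `g (y+1) r = g y r + q^(y+r+1) g y (r+1)`.
-/

open Finset

/-- `n(λ) = ∑_i (i-1)λ_i` for the partition with multiset of parts `μ`
(listing parts in decreasing order). -/
def nstatM (μ : Multiset ℕ) : ℕ :=
  let l := μ.sort (· ≤ ·)
  ∑ j ∈ range l.length, (l.length - 1 - j) * l.getD j 0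

section QPochhammer

variable {R S : Type*} [CommRing R] [CommRing S] (q : R)

def qPochhammer (n : ℕ) : R := ∏ j ∈ Icc 1 n, (1 - q ^ j)

@[simp]
lemma qPochhammer_zero : qPochhammer q 0 = 1 := by simp [qPochhammer]

lemma qPochhammer_succ (n : ℕ) : qPochhammer q (n + 1) = qPochhammer q n * (1 - q ^ (n + 1)) :=
  prod_Icc_succ_top (by omega) _

lemma map_qPochhammer (φ : R →+* S) (n : ℕ) : φ (qPochhammer q n) = qPochhammer (φ q) n := by
  simp [qPochhammer, map_prod]

@[simp]
lemma qPochhammer_zero_left (n : ℕ) : qPochhammer (0 : R) n = 1 :=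
  prod_eq_one fun j hj => by simp [zero_pow (show j ≠ 0 by grind)]

end QPochhammer

section GaussBinom

variable {K : Type*} [Field K] {q : K}

lemma one_sub_pow_ne_zero (hq : ¬IsOfFinOrder q) {j : ℕ} (hj : 0 < j) : 1 - q ^ j ≠ 0 :=
  sub_ne_zero.2 fun h => hq (isOfFinOrder_iff_pow_eq_one.2 ⟨j, hj, h.symm⟩)

lemma qPochhammer_ne_zero (hq : ¬IsOfFinOrder q) (n : ℕ) : qPochhammer q n ≠ 0 :=
  prod_ne_zero_iff.2 fun _ hj => one_sub_pow_ne_zero hq (mem_Icc.1 hj).1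

variable (q) in
def gaussBinom (n k : ℕ) : K :=
  if k ≤ n then qPochhammer q n / (qPochhammer q k * qPochhammer q (n - k)) else 0

lemma gaussBinom_of_le {n k : ℕ} (h : k ≤ n) :
    gaussBinom q n k = qPochhammer q n / (qPochhammer q k * qPochhammer q (n - k)) := if_pos h

lemma gaussBinom_of_lt {n k : ℕ} (h : n < k) : gaussBinom q n k = 0 := if_neg (by omega)

lemma gaussBinom_zero_right (hq : ¬IsOfFinOrder q) (n : ℕ) : gaussBinom q n 0 = 1 := by
  rw [gaussBinom_of_le n.zero_le, qPochhammer_zero, one_mul, Nat.sub_zero,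
    div_self (qPochhammer_ne_zero hq n)]

lemma gaussBinom_add_comm (m n : ℕ) : gaussBinom q (m + n) m = gaussBinom q (m + n) n := by
  rw [gaussBinom_of_le (by omega), gaussBinom_of_le (by omega), Nat.add_sub_cancel_left,
    Nat.add_sub_cancel, mul_comm]

lemma gaussBinom_mul_qPochhammer_div (hq : ¬IsOfFinOrder q) {n k : ℕ} (h : k ≤ n) :
    gaussBinom q n k * qPochhammer q k / qPochhammer q n = (qPochhammer q (n - k))⁻¹ := by
  have hn := qPochhammer_ne_zero hq n
  have hk := qPochhammer_ne_zero hq k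
  rw [gaussBinom_of_le h]
  field_simp

lemma gaussBinom_succ_succ (hq : ¬IsOfFinOrder q) (n k : ℕ) :
    gaussBinom q (n + 1) (k + 1) = gaussBinom q n (k + 1) + q ^ (n - k) * gaussBinom q n k := by
  have := qPochhammer_ne_zero hq
  rcases lt_trichotomy k n with h | rfl | h
  · obtain ⟨j, rfl⟩ := Nat.exists_eq_add_of_lt h
    have hj := one_sub_pow_ne_zero hq j.succ_pos
    have hk := one_sub_pow_ne_zero hq k.succ_pos
    rw [gaussBinom_of_le (by omega), gaussBinom_of_le (by omega), gaussBinom_of_le (by omega),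
      show k + j + 1 + 1 - (k + 1) = j + 1 by omega, show k + j + 1 - (k + 1) = j by omega,
      show k + j + 1 - k = j + 1 by omega, qPochhammer_succ q (k + j + 1), qPochhammer_succ q j,
      qPochhammer_succ q k]
    field_simp
    ring
  · simp [gaussBinom_of_lt, gaussBinom_of_le, div_self, this]
  · simp [gaussBinom_of_lt (show n + 1 < k + 1 by omega), gaussBinom_of_lt h,
      gaussBinom_of_lt (show n < k + 1 by omega)]

lemma one_sub_pow_mul_gaussBinom_succ (hq : ¬IsOfFinOrder q) (n k : ℕ) :
    (1 - q ^ (k + 1)) * gaussBinom q n (k + 1) = (1 - q ^ (n - k)) * gaussBinom q n k := by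
  rcases lt_or_ge k n with h | h
  · obtain ⟨j, rfl⟩ := Nat.exists_eq_add_of_lt h
    have := qPochhammer_ne_zero hq
    have hj := one_sub_pow_ne_zero hq j.succ_pos
    have hk := one_sub_pow_ne_zero hq k.succ_pos
    rw [gaussBinom_of_le (by omega), gaussBinom_of_le (by omega),
      show k + j + 1 - (k + 1) = j by omega, show k + j + 1 - k = j + 1 by omega,
      qPochhammer_succ q j, qPochhammer_succ q k]
    field_simp
  · rw [gaussBinom_of_lt (by omega), Nat.sub_eq_zero_of_le h, pow_zero, sub_self, zero_mul,
      mul_zero]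

lemma gaussBinom_succ_succ' (hq : ¬IsOfFinOrder q) (n k : ℕ) :
    gaussBinom q (n + 1) (k + 1) = gaussBinom q n k + q ^ (k + 1) * gaussBinom q n (k + 1) := by
  rw [gaussBinom_succ_succ hq]
  linear_combination one_sub_pow_mul_gaussBinom_succ hq n k

lemma sum_qpow_mul_gaussBinom (hq : ¬IsOfFinOrder q) (g : ℕ → ℕ → K)
    (hg : ∀ y r, g (y + 1) r = g y r + q ^ (y + r + 1) * g y (r + 1)) (y r : ℕ) :
    ∑ c ∈ range (y + 1), q ^ (c * (c + r)) * gaussBinom q y c * g 0 (c + r) = g y r := by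
  induction y generalizing r with
  | zero => simp [gaussBinom_zero_right hq]
  | succ y ih =>
    have hlow : ∑ c ∈ range (y + 1),
        q ^ ((c + 1) * (c + 1 + r)) * gaussBinom q y (c + 1) * g 0 (c + 1 + r) +
          q ^ (0 * (0 + r)) * gaussBinom q (y + 1) 0 * g 0 (0 + r) = g y r := by
      rw [gaussBinom_zero_right hq, ← gaussBinom_zero_right hq y, ← ih r,
        ← sum_range_succ' (fun c => q ^ (c * (c + r)) * gaussBinom q y c * g 0 (c + r)),
        sum_range_succ, gaussBinom_of_lt (Nat.lt_succ_self y), mul_zero, zero_mul, add_zero]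
    have hhigh : ∀ c ∈ range (y + 1), q ^ ((c + 1) * (c + 1 + r)) * (q ^ (y - c) *
        gaussBinom q y c) * g 0 (c + 1 + r) =
          q ^ (y + r + 1) * (q ^ (c * (c + (r + 1))) * gaussBinom q y c * g 0 (c + (r + 1))) := by
      intro c hc
      obtain ⟨d, rfl⟩ := Nat.exists_eq_add_of_le (Nat.lt_succ_iff.1 (mem_range.1 hc))
      rw [show c + 1 + r = c + (r + 1) by omega, Nat.add_sub_cancel_left]
      ring
    rw [sum_range_succ', hg, ← ih (r + 1), mul_sum, ← sum_congr rfl hhigh, ← hlow]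
    simp only [gaussBinom_succ_succ hq, mul_add, add_mul, sum_add_distrib]
    ring

lemma sum_qpow_mul_gaussBinom_inv_qPochhammer (hq : ¬IsOfFinOrder q) (n r : ℕ) :
    ∑ c ∈ range (n + 1), q ^ (c * (c + r)) * gaussBinom q n c * (qPochhammer q (c + r))⁻¹ =
      (qPochhammer q (n + r))⁻¹ := by
  have hg (y r : ℕ) : (qPochhammer q (y + 1 + r))⁻¹ =
      (qPochhammer q (y + r))⁻¹ + q ^ (y + r + 1) * (qPochhammer q (y + (r + 1)))⁻¹ := by
    have := qPochhammer_ne_zero hq (y + r)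
    have := one_sub_pow_ne_zero hq (y + r).succ_pos
    rw [show y + 1 + r = y + r + 1 by omega, show y + (r + 1) = y + r + 1 by omega,
      qPochhammer_succ]
    field_simp
    ring
  simpa using sum_qpow_mul_gaussBinom hq (fun y r => (qPochhammer q (y + r))⁻¹) hg n r

/-- The `q`-Vandermonde identity. -/
lemma sum_qpow_mul_gaussBinom_mul_gaussBinom (hq : ¬IsOfFinOrder q) (x y r : ℕ) :
    ∑ c ∈ range (y + 1), q ^ (c * (c + r)) * gaussBinom q y c * gaussBinom q x (c + r) =
      gaussBinom q (x + y) (y + r) := by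
  have hg (y r : ℕ) : gaussBinom q (x + (y + 1)) (y + 1 + r) =
      gaussBinom q (x + y) (y + r) + q ^ (y + r + 1) * gaussBinom q (x + y) (y + (r + 1)) := by
    rw [← add_assoc, add_right_comm y, gaussBinom_succ_succ' hq, ← add_assoc]
  simpa using sum_qpow_mul_gaussBinom hq (fun y r => gaussBinom q (x + y) (y + r)) hg y r

end GaussBinom

section PartitionStatistic

def nstatList (l : List ℕ) : ℕ := ∑ j ∈ range l.length, (l.length - 1 - j) * l.getD j 0

lemma nstatList_cons (x : ℕ) (l : List ℕ) : nstatList (x :: l) = l.length * x + nstatList l := by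
  rw [nstatList, List.length_cons, sum_range_succ', nstatList]
  simp only [List.getD_cons_succ, List.getD_cons_zero, Nat.add_sub_cancel, Nat.sub_zero]
  rw [add_comm]
  congr 1
  exact sum_congr rfl fun j _ => by congr 1; omega

def minPairSum (μ : Multiset ℕ) : ℕ := (μ.map fun x => (μ.map (min x)).sum).sum

-- In an increasing list every entry is the smaller one of its pairs with all later entries.
lemma two_mul_nstatList_add_sum {l : List ℕ} (hl : l.Pairwise (· ≤ ·)) :
    2 * nstatList l + l.sum = (l.map fun x => (l.map (min x)).sum).sum := by
  induction l with
  | nil => simp [nstatList]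
  | cons x l ih =>
    rw [List.pairwise_cons] at hl
    have hx : (l.map (min x)).sum = l.length * x := by
      rw [List.map_congr_left fun y hy => min_eq_left (hl.1 y hy)]
      simp
    have hx' : (l.map fun y => min y x + (l.map (min y)).sum).sum =
        l.length * x + (l.map fun y => (l.map (min y)).sum).sum := by
      rw [List.map_congr_left fun y hy => by rw [min_eq_right (hl.1 y hy)], List.sum_map_add]
      simp
    simp only [List.map_cons, List.sum_cons, min_self, nstatList_cons, hx, hx']
    linarith [ih hl.2]

lemma two_mul_nstatM_add_sum (μ : Multiset ℕ) : 2 * nstatM μ + μ.sum = minPairSum μ := by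
  have h := two_mul_nstatList_add_sum (Multiset.pairwise_sort μ (· ≤ ·))
  rw [← Multiset.sum_coe, Multiset.sort_eq] at h
  rw [nstatM, ← nstatList, h, minPairSum]
  conv_rhs => rw [← Multiset.sort_eq μ (· ≤ ·)]
  simp only [Multiset.map_coe, Multiset.sum_coe]

end PartitionStatistic

section MultiplicityProd

variable {α β M : Type*} [DecidableEq α] [DecidableEq β] [CommMonoid M] (f : ℕ → M)

def multiplicityProd (μ : Multiset α) : M := ∏ i ∈ μ.toFinset, f (μ.count i)

lemma multiplicityProd_add {μ ν : Multiset α} (h : Disjoint μ ν) :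
    multiplicityProd f (μ + ν) = multiplicityProd f μ * multiplicityProd f ν := by
  rw [multiplicityProd, Multiset.toFinset_add,
    prod_union (Multiset.disjoint_toFinset.2 h)]
  congr 1 <;> refine prod_congr rfl fun i hi => ?_ <;> rw [Multiset.mem_toFinset] at hi
  · rw [Multiset.count_add, Multiset.count_eq_zero_of_notMem (Multiset.disjoint_left.1 h hi),
      add_zero]
  · rw [Multiset.count_add, Multiset.count_eq_zero_of_notMem (Multiset.disjoint_right.1 h hi),
      zero_add]

lemma multiplicityProd_map {g : α → β} (hg : Function.Injective g) (μ : Multiset α) :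
    multiplicityProd f (μ.map g) = multiplicityProd f μ := by
  rw [multiplicityProd, Multiset.toFinset_map, prod_image hg.injOn]
  simp [Multiset.count_map_eq_count' _ _ hg, multiplicityProd]

lemma multiplicityProd_replicate (hf : f 0 = 1) (s : ℕ) (a : α) :
    multiplicityProd f (Multiset.replicate s a) = f s := by
  rcases s.eq_zero_or_pos with rfl | hs
  · simp [multiplicityProd, hf]
  · simp [multiplicityProd, Multiset.toFinset_replicate, hs.ne']

end MultiplicityProd

section Columns

-- In terms of Young diagrams: prepend a first column of length `b`, resp. delete the first column.
def addColumn (b : ℕ) (μ : Multiset ℕ) : Multiset ℕ :=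
  μ.map (· + 1) + Multiset.replicate (b - Multiset.card μ) 1

def dropColumn (μ : Multiset ℕ) : Multiset ℕ := (μ.map (· - 1)).filter (· ≠ 0)

variable {b : ℕ} {μ : Multiset ℕ}

lemma pos_of_mem_addColumn {x : ℕ} (hx : x ∈ addColumn b μ) : 0 < x := by
  rcases Multiset.mem_add.1 hx with hx | hx
  · obtain ⟨y, -, rfl⟩ := Multiset.mem_map.1 hx
    exact y.succ_pos
  · rw [Multiset.eq_of_mem_replicate hx]
    exact one_pos

lemma pos_of_mem_dropColumn {x : ℕ} (hx : x ∈ dropColumn μ) : 0 < x :=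
  Nat.pos_of_ne_zero (Multiset.mem_filter.1 hx).2

lemma card_addColumn (h : Multiset.card μ ≤ b) : Multiset.card (addColumn b μ) = b := by
  simp only [addColumn, Multiset.card_add, Multiset.card_map, Multiset.card_replicate]
  omega

lemma sum_addColumn (h : Multiset.card μ ≤ b) : (addColumn b μ).sum = μ.sum + b := by
  simp only [addColumn, Multiset.sum_add, Multiset.sum_map_add, Multiset.map_const',
    Multiset.sum_replicate, smul_eq_mul, mul_one, Multiset.map_id']
  omega

lemma minPairSum_addColumn (h : Multiset.card μ ≤ b) :
    minPairSum (addColumn b μ) = minPairSum μ + b ^ 2 := by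
  obtain ⟨s, rfl⟩ := Nat.exists_eq_add_of_le h
  simp only [minPairSum, addColumn, add_tsub_cancel_left, Multiset.map_add, Multiset.map_map,
    Function.comp_apply, Multiset.map_replicate, Multiset.sum_add, Multiset.sum_replicate,
    smul_eq_mul, min_add_add_right, Multiset.sum_map_add, Multiset.map_const', mul_one,
    le_add_iff_nonneg_left, zero_le, inf_of_le_right, inf_of_le_left, min_self]
  ring

lemma two_mul_nstatM_addColumn (h : Multiset.card μ ≤ b) :
    2 * nstatM (addColumn b μ) = 2 * nstatM μ + b * (b - 1) := by
  have hadd := two_mul_nstatM_add_sum (addColumn b μ)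
  rw [minPairSum_addColumn h, sum_addColumn h, ← two_mul_nstatM_add_sum μ] at hadd
  cases b with
  | zero => omega
  | succ b => linarith [show (b + 1) ^ 2 = (b + 1) * (b + 1 - 1) + (b + 1) by simp; ring]

lemma card_dropColumn_le (μ : Multiset ℕ) : Multiset.card (dropColumn μ) ≤ Multiset.card μ :=
  (Multiset.card_le_card (Multiset.filter_le _ _)).trans (Multiset.card_map _ _).le

lemma dropColumn_addColumn (hμ : ∀ x ∈ μ, 0 < x) (b : ℕ) : dropColumn (addColumn b μ) = μ := by
  simp only [dropColumn, addColumn, Multiset.map_add, Multiset.map_map, Function.comp_def,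
    Nat.add_sub_cancel, Multiset.map_id', Multiset.map_replicate, Nat.sub_self,
    Multiset.filter_add]
  rw [Multiset.filter_eq_self.2 fun x hx => (hμ x hx).ne',
    Multiset.filter_eq_nil.2 fun x hx => by rw [Multiset.eq_of_mem_replicate hx]; simp, add_zero]

lemma addColumn_dropColumn (hμ : ∀ x ∈ μ, 0 < x) :
    addColumn (Multiset.card μ) (dropColumn μ) = μ := by
  have hmap : (dropColumn μ).map (· + 1) = μ.filter (fun x => x - 1 ≠ 0) := by
    rw [dropColumn, Multiset.filter_map, Multiset.map_map]
    refine (Multiset.map_congr rfl fun x hx => ?_).trans (Multiset.map_id _)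
    have := hμ x (Multiset.mem_of_mem_filter hx)
    simp only [Function.comp_apply, id]
    omega
  have hrep : Multiset.replicate (Multiset.card μ - Multiset.card (dropColumn μ)) 1 =
      μ.filter (fun x => ¬x - 1 ≠ 0) := by
    refine (Multiset.eq_replicate.2 ⟨?_, fun x hx => ?_⟩).symm
    · have hsplit := Multiset.card_add (μ.filter (fun x => x - 1 ≠ 0))
        (μ.filter (fun x => ¬x - 1 ≠ 0))
      rw [Multiset.filter_add_not] at hsplit
      rw [← Multiset.card_map (· + 1) (dropColumn μ), hmap]
      omega
    · obtain ⟨hxμ, hx⟩ := Multiset.mem_filter.1 hx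
      have := hμ x hxμ
      omega
  rw [addColumn, hmap, hrep, Multiset.filter_add_not]

end Columns

section PartitionWeight

variable {K : Type*} [Field K] {q : K}

-- `t ^ (2 n(λ)) / b_λ(t)` at `t = q`.
variable (q) in
def partitionWeight (μ : Multiset ℕ) : K :=
  q ^ (2 * nstatM μ) * (multiplicityProd (qPochhammer q) μ)⁻¹

lemma partitionWeight_addColumn {b : ℕ} {μ : Multiset ℕ} (hμ : ∀ x ∈ μ, 0 < x)
    (h : Multiset.card μ ≤ b) :
    partitionWeight q (addColumn b μ) =
      q ^ (b * (b - 1)) * (partitionWeight q μ * (qPochhammer q (b - Multiset.card μ))⁻¹) := by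
  have hdisj : Disjoint (μ.map (· + 1)) (Multiset.replicate (b - Multiset.card μ) 1) :=
    Multiset.disjoint_left.2 fun hx hx1 => by
      obtain ⟨y, hy, rfl⟩ := Multiset.mem_map.1 hx
      have := hμ y hy
      have := Multiset.eq_of_mem_replicate hx1
      omega
  rw [partitionWeight, two_mul_nstatM_addColumn h, addColumn, multiplicityProd_add _ hdisj,
    multiplicityProd_map _ (add_left_injective 1),
    multiplicityProd_replicate _ (qPochhammer_zero q), partitionWeight, pow_add, mul_inv]
  ring

lemma sum_partitionWeight_card_eq_sum_card_le {n b k : ℕ} (hk : n + b = k) :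
    ∑ p ∈ univ.filter (fun p : Nat.Partition k => Multiset.card p.parts = b),
        partitionWeight q p.parts =
      q ^ (b * (b - 1)) *
        ∑ p ∈ univ.filter (fun p : Nat.Partition n => Multiset.card p.parts ≤ b),
          partitionWeight q p.parts * (qPochhammer q (b - Multiset.card p.parts))⁻¹ := by
  rw [mul_sum]
  symm
  refine sum_bij'
    (fun p hp => ⟨addColumn b p.parts, pos_of_mem_addColumn, by
      rw [sum_addColumn (mem_filter.1 hp).2, p.parts_sum, hk]⟩)
    (fun p hp => ⟨dropColumn p.parts, pos_of_mem_dropColumn, by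
      have hsum := congrArg Multiset.sum (addColumn_dropColumn fun _ => p.parts_pos)
      rw [sum_addColumn (card_dropColumn_le _), p.parts_sum, (mem_filter.1 hp).2] at hsum
      omega⟩)
    (fun p hp => ?_) (fun p hp => ?_) (fun p hp => ?_) (fun p hp => ?_) (fun p hp => ?_)
  · simpa using card_addColumn (mem_filter.1 hp).2
  · simpa [← (mem_filter.1 hp).2] using card_dropColumn_le p.parts
  · exact Nat.Partition.ext (dropColumn_addColumn (fun _ => p.parts_pos) b)
  · ext1
    conv_rhs => rw [← addColumn_dropColumn fun _ => p.parts_pos, (mem_filter.1 hp).2]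
  · exact (partitionWeight_addColumn (fun _ => p.parts_pos) (mem_filter.1 hp).2).symm

-- As `gaussBinom q a l * qPochhammer q l` is `(q;q)_a / (q;q)_(a-l)` for `l ≤ a` and `0`
-- otherwise, this is `(q;q)_a * ∑_{μ ⊢ n, ℓ(μ) ≤ a} partitionWeight q μ / (q;q)_(a-ℓ(μ))`.
variable (q) in
def lengthWeightedSum (a n : ℕ) : K :=
  ∑ p : Nat.Partition n, partitionWeight q p.parts *
    (gaussBinom q a (Multiset.card p.parts) * qPochhammer q (Multiset.card p.parts))

lemma sum_partitionWeight_card_eq (hq : ¬IsOfFinOrder q) {n b k : ℕ}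
    (hk : n + b = k) :
    ∑ p ∈ univ.filter (fun p : Nat.Partition k => Multiset.card p.parts = b),
        partitionWeight q p.parts =
      q ^ (b * (b - 1)) * lengthWeightedSum q b n / qPochhammer q b := by
  rw [sum_partitionWeight_card_eq_sum_card_le hk, mul_div_assoc, lengthWeightedSum, sum_div,
    sum_filter]
  congr 1
  refine sum_congr rfl fun p _ => ?_
  split_ifs with h
  · rw [mul_div_assoc, gaussBinom_mul_qPochhammer_div hq h]
  · rw [gaussBinom_of_lt (not_le.1 h), zero_mul, mul_zero, zero_div]

lemma sum_partitionWeight_mul_card (hq : ¬IsOfFinOrder q) (h : ℕ → K) (k : ℕ) :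
    ∑ p : Nat.Partition (k + 1), partitionWeight q p.parts * h (Multiset.card p.parts) =
      ∑ c ∈ range (k + 1),
        h (c + 1) * q ^ ((c + 1) * c) * lengthWeightedSum q (c + 1) (k - c) /
          qPochhammer q (c + 1) := by
  have hcard (p : Nat.Partition (k + 1)) : Multiset.card p.parts ∈ range (k + 2) := by
    have := Multiset.card_nsmul_le_sum (a := 1) fun _ hx => p.parts_pos hx
    rw [smul_eq_mul, mul_one, p.parts_sum] at this
    exact mem_range.2 (Nat.lt_succ_of_le this)
  have hempty : ∑ p ∈ univ.filter (fun p : Nat.Partition (k + 1) => Multiset.card p.parts = 0),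
      partitionWeight q p.parts * h (Multiset.card p.parts) = 0 :=
    sum_eq_zero fun p hp => absurd p.parts_sum (by
      rw [Multiset.card_eq_zero.1 (mem_filter.1 hp).2, Multiset.sum_zero]
      omega)
  rw [← sum_fiberwise_of_maps_to (fun p _ => hcard p), sum_range_succ', hempty, add_zero]
  refine sum_congr rfl fun c hc => ?_
  rw [sum_congr rfl fun p hp => by rw [(mem_filter.1 hp).2], ← sum_mul,
    sum_partitionWeight_card_eq hq (show k - c + (c + 1) = k + 1 by
      have := mem_range.1 hc; omega), Nat.add_sub_cancel]
  ring

lemma lengthWeightedSum_eq (hq : ¬IsOfFinOrder q) (a k : ℕ) :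
    lengthWeightedSum q a k = gaussBinom q (a + k - 1) k := by
  induction k using Nat.strong_induction_on generalizing a with
  | _ k ih =>
    rcases k with _ | k
    · simp [lengthWeightedSum, partitionWeight, multiplicityProd, nstatM, gaussBinom_zero_right hq]
    rw [lengthWeightedSum,
      sum_partitionWeight_mul_card hq (fun l => gaussBinom q a l * qPochhammer q l),
      show a + (k + 1) - 1 = a + k by omega, ← sum_qpow_mul_gaussBinom_mul_gaussBinom hq a k 1]
    refine sum_congr rfl fun c hc => ?_
    have hck : c ≤ k := Nat.lt_succ_iff.1 (mem_range.1 hc)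
    rw [ih (k - c) (by omega), show c + 1 + (k - c) - 1 = c + (k - c) by omega,
      ← gaussBinom_add_comm, Nat.add_sub_cancel' hck]
    have := qPochhammer_ne_zero hq (c + 1)
    field_simp
    ring

theorem sum_partitionWeight (hq : ¬IsOfFinOrder q) (m : ℕ) :
    ∑ p : Nat.Partition m, partitionWeight q p.parts = (qPochhammer q m)⁻¹ := by
  rcases m with _ | k
  · simp [partitionWeight, multiplicityProd, nstatM]
  · have h := sum_partitionWeight_mul_card hq (fun _ => 1) k
    simp only [mul_one] at h
    rw [h, ← sum_qpow_mul_gaussBinom_inv_qPochhammer hq k 1]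
    refine sum_congr rfl fun c hc => ?_
    have hck : c ≤ k := Nat.lt_succ_iff.1 (mem_range.1 hc)
    rw [lengthWeightedSum_eq hq, show c + 1 + (k - c) - 1 = c + (k - c) by omega,
      ← gaussBinom_add_comm, Nat.add_sub_cancel' hck]
    ring

end PartitionWeight

section PowerSeries

open PowerSeries

variable {k K : Type*} [Field k] [Field K]

lemma map_inv_of_constantCoeff_ne_zero (φ : PowerSeries k →+* K) {f : PowerSeries k}
    (hf : constantCoeff f ≠ 0) : φ f⁻¹ = (φ f)⁻¹ :=
  eq_inv_of_mul_eq_one_right (by rw [← map_mul, PowerSeries.mul_inv_cancel f hf, map_one])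

lemma constantCoeff_qPochhammer_X (n : ℕ) :
    constantCoeff (qPochhammer (X : PowerSeries k) n) = 1 := by
  rw [map_qPochhammer, constantCoeff_X, qPochhammer_zero_left]

lemma not_isOfFinOrder_map_X {φ : PowerSeries k →+* K} (hφ : Function.Injective φ) :
    ¬IsOfFinOrder (φ X) := by
  rw [isOfFinOrder_iff_pow_eq_one]
  rintro ⟨n, hn, h⟩
  rw [← map_pow, ← map_one φ] at h
  simpa [hn.ne'] using congrArg constantCoeff (hφ h)

lemma map_prod_inv_one_sub_X_pow (φ : PowerSeries k →+* K) (n : ℕ) :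
    φ (∏ j ∈ Icc 1 n, (1 - X ^ j)⁻¹) = (qPochhammer (φ X) n)⁻¹ := by
  rw [qPochhammer, ← prod_inv_distrib, map_prod]
  refine prod_congr rfl fun j hj => ?_
  have hj0 : j ≠ 0 := by grind
  rw [map_inv_of_constantCoeff_ne_zero φ (by simp [hj0]), map_sub, map_one, map_pow]

lemma map_X_pow_mul_inv_multiplicityProd (φ : PowerSeries k →+* K) (e : ℕ) (μ : Multiset ℕ) :
    φ (X ^ e * (multiplicityProd (qPochhammer X) μ)⁻¹) =
      φ X ^ e * (multiplicityProd (qPochhammer (φ X)) μ)⁻¹ := by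
  rw [map_mul, map_pow, map_inv_of_constantCoeff_ne_zero φ, multiplicityProd, multiplicityProd,
    map_prod]
  · simp only [map_qPochhammer]
  · simp [multiplicityProd, constantCoeff_qPochhammer_X]

end PowerSeries

theorem stmt2 (m : ℕ) :
    (∏ j ∈ Icc 1 m, (1 - (PowerSeries.X : PowerSeries ℚ) ^ j)⁻¹) =
      ∑ p : Nat.Partition m,
        (PowerSeries.X : PowerSeries ℚ) ^ (2 * nstatM p.parts) *
          (∏ i ∈ p.parts.toFinset,
            ∏ j ∈ Icc 1 (p.parts.count i),
              (1 - (PowerSeries.X : PowerSeries ℚ) ^ j))⁻¹ := by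
  set φ := algebraMap (PowerSeries ℚ) (FractionRing (PowerSeries ℚ))
  have hφ : Function.Injective φ := IsFractionRing.injective _ _
  apply hφ
  rw [map_prod_inv_one_sub_X_pow, map_sum, ← sum_partitionWeight (not_isOfFinOrder_map_X hφ)]
  exact sum_congr rfl fun p _ => (map_X_pow_mul_inv_multiplicityProd φ _ p.parts).symm
end

section
/- The arithmetic function ϑ(n) := ∏_{p^a ∥ n} (1-p^{-1})^{-1}(1-p^{-2})^{-1}⋯(1-p^{-a})^{-1} (product over prime powers p^a exactly dividing n) is the unique arithmetic function f: ℕ → ℚ satisfying f(1) = 1 and f(n) = ∑_{d | n} f(d)/d for all n ≥ 1. -/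
open Finset

/-- `ϑ(n) = ∏_{p^a ∥ n} (1-p⁻¹)⁻¹(1-p⁻²)⁻¹⋯(1-p^{-a})⁻¹`. -/
noncomputable def theta (n : ℕ) : ℝ :=
  n.factorization.prod fun p a => ∏ j ∈ Icc 1 a, (1 - ((p : ℝ))⁻¹ ^ j)⁻¹

/-!
Since `n ∣ n`, the recurrence reads `(1 - 1/n) f(n) = ∑_{d ∣ n, d < n} f(d)/d`, and `1 - 1/n ≠ 0`
for `n > 1`, so `f` is determined by `f(1)`. For existence, both sides of the recurrence are
multiplicative in `n`, so it suffices to check it at `n = p^a`, where with `x = 1/p` it becomes the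
telescoping identity `∑_{i ≤ a} x^i ∏_{j ≤ i} (1 - x^j)⁻¹ = ∏_{j ≤ a} (1 - x^j)⁻¹`.
-/

open ArithmeticFunction
open scoped ArithmeticFunction.zeta

section DivisorRecurrence

variable {K : Type*} [Field K]

theorem mul_one_sub_inv_eq_sum_properDivisors {f : ℕ → K} {n : ℕ} (hn : n ≠ 0)
    (hf : f n = ∑ d ∈ n.divisors, f d / d) :
    f n * (1 - (n : K)⁻¹) = ∑ d ∈ n.properDivisors, f d / d := by
  rw [← Nat.cons_self_properDivisors hn, sum_cons] at hf
  rw [mul_one_sub, ← div_eq_mul_inv, sub_eq_iff_eq_add', ← hf]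

theorem eq_of_eq_sum_divisors_div [CharZero K] {f g : ℕ → K} (h1 : f 1 = g 1)
    (hf : ∀ n, 1 ≤ n → f n = ∑ d ∈ n.divisors, f d / d)
    (hg : ∀ n, 1 ≤ n → g n = ∑ d ∈ n.divisors, g d / d) :
    ∀ n, 1 ≤ n → f n = g n := by
  intro n
  induction n using Nat.strong_induction_on with
  | _ n ih =>
    intro hn
    rcases hn.eq_or_lt with rfl | hn1
    · exact h1
    have hsum : ∑ d ∈ n.properDivisors, f d / d = ∑ d ∈ n.properDivisors, g d / d := by
      refine sum_congr rfl fun d hd => ?_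
      obtain ⟨hdn, hlt⟩ := Nat.mem_properDivisors.mp hd
      rw [ih d hlt (Nat.pos_of_dvd_of_pos hdn hn)]
    have hunit : (1 : K) - (n : K)⁻¹ ≠ 0 := by
      rw [sub_ne_zero, ne_comm, inv_ne_one, Nat.cast_ne_one]
      exact hn1.ne'
    refine mul_right_cancel₀ hunit ?_
    rw [mul_one_sub_inv_eq_sum_properDivisors (by omega) (hf n hn),
      mul_one_sub_inv_eq_sum_properDivisors (by omega) (hg n hn), hsum]

theorem sum_prod_inv_one_sub_pow_mul_pow {x : K} (a : ℕ) (hx : ∀ j ∈ Icc 1 a, 1 - x ^ j ≠ 0) :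
    ∑ i ∈ range (a + 1), (∏ j ∈ Icc 1 i, (1 - x ^ j)⁻¹) * x ^ i =
      ∏ j ∈ Icc 1 a, (1 - x ^ j)⁻¹ := by
  induction a with
  | zero => simp
  | succ a ih =>
    have hx' : ∀ j ∈ Icc 1 a, 1 - x ^ j ≠ 0 := fun j hj =>
      hx j (Icc_subset_Icc_right a.le_succ hj)
    have hlast : 1 - x ^ (a + 1) ≠ 0 := hx (a + 1) (by simp)
    rw [sum_range_succ, ih hx', prod_Icc_succ_top (by omega)]
    field_simp
    ring

end DivisorRecurrence

theorem theta_one : theta 1 = 1 := by simp [theta]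

theorem theta_mul {m n : ℕ} (hm : m ≠ 0) (hn : n ≠ 0) (h : m.Coprime n) :
    theta (m * n) = theta m * theta n := by
  rw [theta, Nat.factorization_mul hm hn, Finsupp.prod_add_index_of_disjoint]
  · rfl
  rw [Nat.support_factorization, Nat.support_factorization]
  exact h.disjoint_primeFactors

theorem theta_prime_pow {p : ℕ} (hp : p.Prime) (a : ℕ) :
    theta (p ^ a) = ∏ j ∈ Icc 1 a, (1 - ((p : ℝ))⁻¹ ^ j)⁻¹ := by
  rw [theta, hp.factorization_pow]
  exact Finsupp.prod_single_index (by simp)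

/-- `theta` as an arithmetic function; the value at `0` is forced to be `0`, whereas `theta 0 = 1`. -/
noncomputable def arithTheta : ArithmeticFunction ℝ :=
  ⟨fun n => if n = 0 then 0 else theta n, rfl⟩

theorem arithTheta_apply {n : ℕ} (hn : n ≠ 0) : arithTheta n = theta n := if_neg hn

theorem isMultiplicative_arithTheta : arithTheta.IsMultiplicative := by
  refine IsMultiplicative.iff_ne_zero.mpr ⟨?_, fun {m n} hm hn h => ?_⟩
  · rw [arithTheta_apply one_ne_zero, theta_one]
  · rw [arithTheta_apply hm, arithTheta_apply hn, arithTheta_apply (mul_ne_zero hm hn),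
      theta_mul hm hn h]

theorem arithTheta_eq_pdiv_id_mul_zeta :
    arithTheta = arithTheta.pdiv (ArithmeticFunction.id : ArithmeticFunction ℝ) * ζ := by
  refine (IsMultiplicative.eq_iff_eq_on_prime_powers _ isMultiplicative_arithTheta _
    ((isMultiplicative_arithTheta.pdiv isMultiplicative_id.natCast).mul
      isMultiplicative_zeta.natCast)).mpr fun p a hp => ?_
  have hx : ∀ j ∈ Icc 1 a, 1 - ((p : ℝ))⁻¹ ^ j ≠ 0 := fun j hj => by
    have hp1 : (1 : ℝ) < p := by exact_mod_cast hp.one_lt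
    have : ((p : ℝ))⁻¹ ^ j < 1 :=
      pow_lt_one₀ (by positivity) (inv_lt_one_of_one_lt₀ hp1) (by simp at hj; omega)
    exact sub_ne_zero.mpr this.ne'
  rw [coe_mul_zeta_apply, Nat.sum_divisors_prime_pow hp, arithTheta_apply (pow_ne_zero a hp.ne_zero),
    theta_prime_pow hp, ← sum_prod_inv_one_sub_pow_mul_pow a hx]
  refine sum_congr rfl fun i _ => ?_
  rw [pdiv_apply, natCoe_apply, id_apply, arithTheta_apply (pow_ne_zero i hp.ne_zero),
    theta_prime_pow hp, inv_pow, div_eq_mul_inv, Nat.cast_pow]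

theorem theta_eq_sum_divisors_div {n : ℕ} (hn : 1 ≤ n) :
    theta n = ∑ d ∈ n.divisors, theta d / d := by
  have h := congrArg (· n) arithTheta_eq_pdiv_id_mul_zeta
  simp only [coe_mul_zeta_apply, pdiv_apply, natCoe_apply, id_apply] at h
  rw [← arithTheta_apply (Nat.one_le_iff_ne_zero.mp hn), h]
  exact sum_congr rfl fun d hd => by rw [arithTheta_apply (Nat.ne_of_gt (Nat.pos_of_mem_divisors hd))]

theorem stmt6 :
    (theta 1 = 1 ∧ ∀ n : ℕ, 1 ≤ n → theta n = ∑ d ∈ n.divisors, theta d / d) ∧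
    ∀ f : ℕ → ℝ, f 1 = 1 → (∀ n : ℕ, 1 ≤ n → f n = ∑ d ∈ n.divisors, f d / d) →
      ∀ n : ℕ, 1 ≤ n → f n = theta n :=
  ⟨⟨theta_one, fun _ => theta_eq_sum_divisors_div⟩, fun _ hf1 hf =>
    eq_of_eq_sum_divisors_div (hf1.trans theta_one.symm) hf fun _ => theta_eq_sum_divisors_div⟩
end

section
/- For a prime p and a ≥ 1, one has ∏_{j=1}^{a} (1-p^{-j})^{-1} = ∑_{λ ⊢ a} p^{-2n(λ)} / ∏_{i≥1} ∏_{j=1}^{m_i(λ)} (1-p^{-j}), summing over partitions λ of a. -/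
open Finset

/-!
Write `Z_w(b) = ∑_{λ ⊢ b} w(ℓ(λ)) t^{2n(λ)} / b_λ(t)`. Removing the first column (of length
`k = ℓ(λ)`) of `λ` leaves a partition `μ ⊢ b - k` with `ℓ(μ) ≤ k`, and
`n(λ) = n(μ) + C(k, 2)`, `b_λ(t) = (t;t)_{k - ℓ(μ)} b_μ(t)`. Hence `Z_w(b)` is a sum over `k` of
`w(k) t^{k(k-1)} Z_{w_k}(b - k)` with `w_k(r) = 1 / (t;t)_{k-r}` for `r ≤ k` (and `0` otherwise).
By strong induction and the `q`-Vandermonde identity, `Z_{w_m}(b) = [m+b-1, b]_t / (t;t)_m`;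
removing one more column and the analogous identity for `F n k = 1 / (t;t)_k` give
`Z_1(a) = 1 / (t;t)_a`. This holds in any field as long as `t` is not a root of unity,
which is the case for `t = 1/p`.
-/

namespace QPartition

variable {K : Type*} [Field K] {t : K}

def qPochhammer (t : K) (n : ℕ) : K := ∏ j ∈ Icc 1 n, (1 - t ^ j)

@[simp]
lemma qPochhammer_zero : qPochhammer t 0 = 1 := by simp [qPochhammer]

lemma qPochhammer_succ (n : ℕ) : qPochhammer t (n + 1) = qPochhammer t n * (1 - t ^ (n + 1)) :=
  prod_Icc_succ_top (by omega) _

lemma one_sub_pow_ne_zero (ht : ¬IsOfFinOrder t) {j : ℕ} (hj : 0 < j) : 1 - t ^ j ≠ 0 :=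
  sub_ne_zero.mpr fun h => ht (isOfFinOrder_iff_pow_eq_one.mpr ⟨j, hj, h.symm⟩)

lemma qPochhammer_ne_zero (ht : ¬IsOfFinOrder t) (n : ℕ) : qPochhammer t n ≠ 0 :=
  prod_ne_zero_iff.mpr fun _ hj => one_sub_pow_ne_zero ht (mem_Icc.mp hj).1

def qBinom (t : K) (n k : ℕ) : K :=
  if k ≤ n then qPochhammer t n / (qPochhammer t k * qPochhammer t (n - k)) else 0

lemma qBinom_of_lt {n k : ℕ} (h : n < k) : qBinom t n k = 0 := if_neg (by omega)

lemma qBinom_symm {n k : ℕ} (h : k ≤ n) : qBinom t n (n - k) = qBinom t n k := by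
  rw [qBinom, qBinom, if_pos h, if_pos (by omega), Nat.sub_sub_self h, mul_comm]

section
variable (ht : ¬IsOfFinOrder t)
include ht

lemma div_qPochhammer_eq_qBinom (n k : ℕ) :
    (if k ≤ n then (qPochhammer t k * qPochhammer t (n - k))⁻¹ else 0) =
      qBinom t n k / qPochhammer t n := by
  unfold qBinom
  split_ifs
  · field_simp [qPochhammer_ne_zero ht]
  · rw [zero_div]

lemma qBinom_zero_right (n : ℕ) : qBinom t n 0 = 1 := by
  simp [qBinom, qPochhammer_ne_zero ht]

lemma qBinom_self (n : ℕ) : qBinom t n n = 1 := by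
  simp [qBinom, qPochhammer_ne_zero ht]

lemma qBinom_succ_succ (n k : ℕ) :
    qBinom t (n + 1) (k + 1) = qBinom t n (k + 1) + t ^ (n - k) * qBinom t n k := by
  rcases lt_trichotomy k n with h | rfl | h
  · obtain ⟨d, rfl⟩ := Nat.exists_eq_add_of_lt h
    simp only [qBinom, if_pos (by omega : k + 1 ≤ k + d + 1 + 1),
      if_pos (by omega : k + 1 ≤ k + d + 1), if_pos (by omega : k ≤ k + d + 1),
      show k + d + 1 - k = d + 1 by omega, show k + d + 1 + 1 - (k + 1) = d + 1 by omega,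
      show k + d + 1 - (k + 1) = d by omega, qPochhammer_succ]
    have := qPochhammer_ne_zero ht
    have h1 := one_sub_pow_ne_zero ht (by omega : 0 < k + 1)
    have h2 := one_sub_pow_ne_zero ht (by omega : 0 < d + 1)
    field_simp
    ring
  · simp [qBinom_self ht, qBinom_of_lt]
  · simp [qBinom_of_lt, h, Nat.lt_succ_of_lt h]

lemma qBinom_succ_succ' (n k : ℕ) :
    qBinom t (n + 1) (k + 1) = t ^ (k + 1) * qBinom t n (k + 1) + qBinom t n k := by
  rcases lt_trichotomy k n with h | rfl | h
  · have e : n + 1 - (k + 1) = n - (k + 1) + 1 := by omega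
    rw [← qBinom_symm (by omega), e, qBinom_succ_succ ht, qBinom_symm (by omega),
      show n - (n - (k + 1)) = k + 1 by omega, show n - (k + 1) + 1 = n - k by omega,
      qBinom_symm (by omega)]
    ring
  · simp [qBinom_self ht, qBinom_of_lt]
  · simp [qBinom_of_lt, h, Nat.lt_succ_of_lt h]

/-- For `F = qBinom t` this is the `q`-Vandermonde identity. -/
lemma sum_qBinom_mul_of_pascal (F : ℕ → ℕ → K)
    (hF : ∀ n k, F (n + 1) (k + 1) = t ^ (k + 1) * F n (k + 1) + F n k) (m a c : ℕ) :
    ∑ j ∈ range (a + 1), t ^ (j * (j + c)) * qBinom t a j * F m (j + c) = F (m + a) (a + c) := by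
  induction a generalizing c with
  | zero => simp [qBinom_zero_right ht]
  | succ a ih =>
    have shifted : ∀ j ∈ range (a + 1),
        t ^ ((j + 1) * (j + 1 + c)) * qBinom t (a + 1) (j + 1) * F m (j + 1 + c) =
          t ^ ((j + 1) * (j + 1 + c)) * qBinom t a (j + 1) * F m (j + 1 + c) +
            t ^ (a + c + 1) * (t ^ (j * (j + (c + 1))) * qBinom t a j * F m (j + (c + 1))) := by
      intro j hj
      obtain ⟨d, rfl⟩ := Nat.exists_eq_add_of_le (Nat.lt_succ_iff.mp (mem_range.mp hj))
      rw [qBinom_succ_succ ht, Nat.add_sub_cancel_left, show j + 1 + c = j + (c + 1) by omega]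
      ring
    rw [sum_range_succ', sum_congr rfl shifted, sum_add_distrib, ← mul_sum, ih (c + 1),
      qBinom_zero_right ht]
    have unshifted :
        ∑ j ∈ range (a + 1), t ^ ((j + 1) * (j + 1 + c)) * qBinom t a (j + 1) * F m (j + 1 + c) +
          F m c = F (m + a) (a + c) := by
      rw [sum_range_succ, qBinom_of_lt (by omega), ← ih c, sum_range_succ' _ a]
      simp [qBinom_zero_right ht]
    rw [show m + (a + 1) = m + a + 1 by omega, show a + 1 + c = a + c + 1 by omega, hF,
      ← unshifted, show a + (c + 1) = a + c + 1 by omega]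
    simp only [zero_add, zero_mul, pow_zero, one_mul]
    abel

end

def addColumn (k : ℕ) (s : Multiset ℕ) : Multiset ℕ :=
  (s + Multiset.replicate (k - s.card) 0).map (· + 1)

def dropColumn (s : Multiset ℕ) : Multiset ℕ := (s.map (· - 1)).filter (· ≠ 0)

lemma zero_notMem_addColumn (k : ℕ) (s : Multiset ℕ) : 0 ∉ addColumn k s := by
  simp [addColumn, Multiset.mem_replicate]

lemma zero_notMem_dropColumn (s : Multiset ℕ) : 0 ∉ dropColumn s := by
  simp [dropColumn]

lemma card_addColumn {k : ℕ} {s : Multiset ℕ} (h : s.card ≤ k) : (addColumn k s).card = k := by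
  simp only [addColumn, Multiset.card_map, Multiset.card_add, Multiset.card_replicate]
  omega

lemma sum_addColumn {k : ℕ} {s : Multiset ℕ} (h : s.card ≤ k) :
    (addColumn k s).sum = s.sum + k := by
  simp only [addColumn, Multiset.sum_map_add, Multiset.map_id', Multiset.map_const',
    Multiset.sum_replicate, smul_eq_mul, mul_one, Multiset.card_add, Multiset.card_replicate,
    Multiset.sum_add]
  omega

lemma card_dropColumn_le (s : Multiset ℕ) : (dropColumn s).card ≤ s.card :=
  (Multiset.card_le_card (Multiset.filter_le _ _)).trans (Multiset.card_map _ _).le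

lemma dropColumn_addColumn (k : ℕ) {s : Multiset ℕ} (hs : 0 ∉ s) :
    dropColumn (addColumn k s) = s := by
  simp only [dropColumn, addColumn, Multiset.map_map, Function.comp_def, Nat.add_sub_cancel,
    Multiset.map_id', Multiset.filter_add]
  rw [Multiset.filter_eq_self.mpr fun x hx => ne_of_mem_of_not_mem hx hs,
    Multiset.filter_eq_nil.mpr fun x hx => by simp [Multiset.eq_of_mem_replicate hx], add_zero]

lemma addColumn_dropColumn {s : Multiset ℕ} (hs : 0 ∉ s) :
    addColumn s.card (dropColumn s) = s := by
  have hsplit := Multiset.filter_add_not (· ≠ 0) (s.map (· - 1))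
  simp only [ne_eq, Decidable.not_not, Multiset.filter_eq' _ 0] at hsplit
  have hcard := congrArg Multiset.card hsplit
  rw [Multiset.card_add, Multiset.card_replicate, Multiset.card_map] at hcard
  rw [addColumn, dropColumn, show s.card - (Multiset.filter (· ≠ 0) (s.map (· - 1))).card =
    Multiset.count 0 (s.map (· - 1)) by simp only [ne_eq] at hcard ⊢; omega]
  rw [hsplit, Multiset.map_map]
  conv_rhs => rw [← Multiset.map_id s]
  refine Multiset.map_congr rfl fun x hx => ?_
  have : x ≠ 0 := ne_of_mem_of_not_mem hx hs
  simp only [Function.comp_apply, id_eq]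
  omega

def nstatList (l : List ℕ) : ℕ := ∑ j ∈ range l.length, (l.length - 1 - j) * l.getD j 0

lemma nstatList_cons (x : ℕ) (l : List ℕ) : nstatList (x :: l) = l.length * x + nstatList l := by
  simp only [nstatList, List.length_cons, sum_range_succ', List.getD_cons_succ,
    List.getD_cons_zero, Nat.add_sub_cancel, Nat.sub_zero, Nat.sub_add_eq]
  rw [add_comm]
  simp only [Nat.sub_right_comm _ 1]

lemma nstatList_map_succ (l : List ℕ) :
    nstatList (l.map (· + 1)) = nstatList l + l.length.choose 2 := by
  induction l with
  | nil => simp [nstatList]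
  | cons x l ih =>
    simp only [List.map_cons, nstatList_cons, ih, List.length_map, List.length_cons,
      Nat.choose_succ_succ', Nat.choose_one_right]
    ring

lemma nstatList_replicate_one_append (c : ℕ) (l : List ℕ) :
    nstatList (List.replicate c 1 ++ l.map (· + 1)) = nstatList l + (c + l.length).choose 2 := by
  induction c with
  | zero => simp [nstatList_map_succ]
  | succ c ih =>
    rw [List.replicate_succ, List.cons_append, nstatList_cons, ih, List.length_append,
      List.length_replicate, List.length_map, show c + 1 + l.length = c + l.length + 1 by omega,
      Nat.choose_succ_succ', Nat.choose_one_right]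
    ring

lemma sort_addColumn (k : ℕ) (s : Multiset ℕ) :
    (addColumn k s).sort (· ≤ ·) =
      List.replicate (k - s.card) 1 ++ (s.sort (· ≤ ·)).map (· + 1) := by
  refine List.Perm.eq_of_pairwise' (Multiset.pairwise_sort _ _) ?_ ?_
  · refine List.pairwise_append.mpr ⟨List.pairwise_replicate.mpr (Or.inr le_rfl), ?_, ?_⟩
    · exact List.pairwise_map.mpr ((Multiset.pairwise_sort _ _).imp (Nat.succ_le_succ ·))
    · intro x hx y hy
      obtain ⟨z, -, rfl⟩ := List.mem_map.mp hy
      rw [List.eq_of_mem_replicate hx]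
      omega
  · rw [← Multiset.coe_eq_coe, Multiset.sort_eq, ← Multiset.coe_add, ← Multiset.map_coe,
      Multiset.sort_eq, Multiset.coe_replicate, addColumn, Multiset.map_add,
      Multiset.map_replicate, add_comm]

lemma nstatM_addColumn {k : ℕ} {s : Multiset ℕ} (h : s.card ≤ k) :
    nstatM (addColumn k s) = nstatM s + k.choose 2 := by
  change nstatList _ = nstatList _ + _
  rw [sort_addColumn, nstatList_replicate_one_append, Multiset.length_sort,
    Nat.sub_add_cancel h]

/-- `b_λ(t)` for the partition with multiset of parts `s`. -/
def bProd (t : K) (s : Multiset ℕ) : K := ∏ i ∈ s.toFinset, qPochhammer t (s.count i)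

lemma bProd_eq_prod_of_toFinset_subset {s : Multiset ℕ} {T : Finset ℕ} (hT : s.toFinset ⊆ T) :
    bProd t s = ∏ i ∈ T, qPochhammer t (s.count i) :=
  prod_subset hT fun i _ hi => by rw [Multiset.count_eq_zero_of_notMem (by simpa using hi),
    qPochhammer_zero]

lemma bProd_map {f : ℕ → ℕ} (hf : Function.Injective f) (s : Multiset ℕ) :
    bProd t (s.map f) = bProd t s := by
  rw [bProd, Multiset.toFinset_map, prod_image hf.injOn, bProd]
  simp only [Multiset.count_map_eq_count' f s hf]

lemma bProd_add_replicate {a : ℕ} {s : Multiset ℕ} (ha : a ∉ s) (c : ℕ) :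
    bProd t (s + Multiset.replicate c a) = qPochhammer t c * bProd t s := by
  rw [bProd_eq_prod_of_toFinset_subset (T := insert a s.toFinset) (by
      intro i; simp only [Multiset.mem_toFinset, Multiset.mem_add, mem_insert,
        Multiset.mem_replicate]; tauto),
    prod_insert (by simpa using ha), bProd]
  simp only [Multiset.count_add, Multiset.count_replicate_self, Multiset.count_eq_zero_of_notMem ha,
    zero_add]
  congr 1
  refine prod_congr rfl fun i hi => ?_
  rw [Multiset.count_replicate, if_neg (ne_of_mem_of_not_mem (Multiset.mem_toFinset.mp hi) ha).symm,
    add_zero]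

lemma bProd_addColumn (k : ℕ) {s : Multiset ℕ} (hs : 0 ∉ s) :
    bProd t (addColumn k s) = qPochhammer t (k - s.card) * bProd t s := by
  rw [addColumn, bProd_map (add_left_injective 1), bProd_add_replicate hs]

lemma sum_dropColumn {s : Multiset ℕ} (hs : 0 ∉ s) : (dropColumn s).sum + s.card = s.sum := by
  conv_rhs => rw [← addColumn_dropColumn hs]
  rw [sum_addColumn (card_dropColumn_le s)]

lemma card_parts_le {n : ℕ} (lam : Nat.Partition n) : lam.parts.card ≤ n := by
  simpa [lam.parts_sum] using
    Multiset.card_nsmul_le_sum (s := lam.parts) (a := 1) fun _ hi => lam.parts_pos hi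

lemma card_parts_pos {n : ℕ} (lam : Nat.Partition (n + 1)) : 0 < lam.parts.card := by
  refine Multiset.card_pos.mpr fun h => ?_
  simpa [h] using lam.parts_sum

lemma zero_notMem_parts {n : ℕ} (lam : Nat.Partition n) : 0 ∉ lam.parts :=
  fun h => (lam.parts_pos h).false

def partitionTerm (t : K) (s : Multiset ℕ) : K := t ^ (2 * nstatM s) / bProd t s

lemma partitionTerm_addColumn (j : ℕ) {s : Multiset ℕ} (hs : 0 ∉ s) (h : s.card ≤ j + 1) :
    partitionTerm t (addColumn (j + 1) s) =
      t ^ (j * (j + 1)) * ((qPochhammer t (j + 1 - s.card))⁻¹ * partitionTerm t s) := by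
  have hexp : 2 * (j + 1).choose 2 = j * (j + 1) := by
    have := Nat.add_one_mul_choose_eq j 1
    rw [Nat.choose_one_right] at this
    linarith
  rw [partitionTerm, partitionTerm, nstatM_addColumn h, bProd_addColumn _ hs, mul_add, hexp,
    pow_add]
  field_simp

def partitionSum (t : K) (w : ℕ → K) (b : ℕ) : K :=
  ∑ lam : Nat.Partition b, w lam.parts.card * partitionTerm t lam.parts

def boundedWeight (t : K) (m r : ℕ) : K := if r ≤ m then (qPochhammer t (m - r))⁻¹ else 0

@[simp]
lemma partitionSum_zero (w : ℕ → K) : partitionSum t w 0 = w 0 := by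
  simp [partitionSum, partitionTerm, bProd, nstatM]

/-- `addColumn (j + 1)` is a bijection between the two index sets, with inverse `dropColumn`. -/
lemma sum_partitions_card_eq {M : Type*} [AddCommMonoid M] (g : Multiset ℕ → M) {b j : ℕ}
    (hj : j ≤ b) :
    ∑ lam : Nat.Partition (b + 1) with lam.parts.card = j + 1, g lam.parts =
      ∑ mu : Nat.Partition (b - j) with mu.parts.card ≤ j + 1, g (addColumn (j + 1) mu.parts) := by
  symm
  refine sum_bij'
    (fun mu hmu => ⟨addColumn (j + 1) mu.parts,
      fun hi => Nat.pos_of_ne_zero (ne_of_mem_of_not_mem hi (zero_notMem_addColumn _ _)), by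
        rw [sum_addColumn (mem_filter.mp hmu).2, mu.parts_sum]; omega⟩)
    (fun lam hlam => ⟨dropColumn lam.parts,
      fun hi => Nat.pos_of_ne_zero (ne_of_mem_of_not_mem hi (zero_notMem_dropColumn _)), by
        have := sum_dropColumn (zero_notMem_parts lam)
        rw [lam.parts_sum, (mem_filter.mp hlam).2] at this
        omega⟩) ?_ ?_ ?_ ?_ ?_
  · intro mu hmu
    simp [card_addColumn (mem_filter.mp hmu).2]
  · intro lam hlam
    simpa [(mem_filter.mp hlam).2] using card_dropColumn_le lam.parts
  · intro mu _
    exact Nat.Partition.ext (dropColumn_addColumn _ (zero_notMem_parts mu))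
  · intro lam hlam
    exact Nat.Partition.ext (by
      simpa [(mem_filter.mp hlam).2] using addColumn_dropColumn (zero_notMem_parts lam))
  · intro mu _
    rfl

lemma partitionSum_succ (w : ℕ → K) (b : ℕ) :
    partitionSum t w (b + 1) = ∑ j ∈ range (b + 1),
      w (j + 1) * t ^ (j * (j + 1)) * partitionSum t (boundedWeight t (j + 1)) (b - j) := by
  rw [partitionSum, ← sum_fiberwise_of_maps_to (g := fun lam => lam.parts.card - 1)
    (t := range (b + 1)) fun lam _ => mem_range.mpr (by have := card_parts_le lam; omega)]
  refine sum_congr rfl fun j hj => ?_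
  have hfiber : ∀ lam : Nat.Partition (b + 1), lam.parts.card - 1 = j ↔ lam.parts.card = j + 1 :=
    fun lam => by have := card_parts_pos lam; omega
  have hbounded : partitionSum t (boundedWeight t (j + 1)) (b - j) =
      ∑ mu : Nat.Partition (b - j) with mu.parts.card ≤ j + 1,
        (qPochhammer t (j + 1 - mu.parts.card))⁻¹ * partitionTerm t mu.parts := by
    rw [partitionSum, sum_filter]
    exact sum_congr rfl fun mu _ => by unfold boundedWeight; split_ifs <;> simp
  rw [filter_congr fun lam _ => hfiber lam,
    sum_congr rfl fun lam hlam => by rw [(mem_filter.mp hlam).2],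
    sum_partitions_card_eq (fun s => w (j + 1) * partitionTerm t s)
      (Nat.lt_succ_iff.mp (mem_range.mp hj)), hbounded, mul_sum]
  refine sum_congr rfl fun mu hmu => ?_
  rw [partitionTerm_addColumn j (zero_notMem_parts mu) (mem_filter.mp hmu).2]
  ring

section
variable (ht : ¬IsOfFinOrder t)
include ht

lemma partitionSum_boundedWeight (m b : ℕ) :
    partitionSum t (boundedWeight t m) b = qBinom t (m + b - 1) b / qPochhammer t m := by
  induction b using Nat.strong_induction_on generalizing m with
  | _ b ih =>
  rcases b with _ | b
  · simp [boundedWeight, qBinom_zero_right ht]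
  have hterm : ∀ j ∈ range (b + 1),
      boundedWeight t m (j + 1) * t ^ (j * (j + 1)) *
          partitionSum t (boundedWeight t (j + 1)) (b - j) =
        t ^ (j * (j + 1)) * qBinom t b j * qBinom t m (j + 1) / qPochhammer t m := by
    intro j hj
    have hjb := Nat.lt_succ_iff.mp (mem_range.mp hj)
    rw [ih _ (by omega), show j + 1 + (b - j) - 1 = b by omega, qBinom_symm hjb,
      mul_div_assoc, ← div_qPochhammer_eq_qBinom ht, boundedWeight]
    split_ifs
    · field_simp
    · simp
  rw [partitionSum_succ, sum_congr rfl hterm, ← sum_div,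
    sum_qBinom_mul_of_pascal ht _ (qBinom_succ_succ' ht) m b 1, ← add_assoc, Nat.add_sub_cancel]

lemma partitionSum_one (a : ℕ) : partitionSum t 1 a = (qPochhammer t a)⁻¹ := by
  rcases a with _ | a
  · simp
  have hterm : ∀ j ∈ range (a + 1),
      (1 : ℕ → K) (j + 1) * t ^ (j * (j + 1)) * partitionSum t (boundedWeight t (j + 1)) (a - j) =
        t ^ (j * (j + 1)) * qBinom t a j * (qPochhammer t (j + 1))⁻¹ := by
    intro j hj
    have hja := Nat.lt_succ_iff.mp (mem_range.mp hj)
    rw [partitionSum_boundedWeight ht, show j + 1 + (a - j) - 1 = a by omega, qBinom_symm hja,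
      Pi.one_apply, one_mul, div_eq_mul_inv, mul_assoc]
  have hpascal : ∀ n k : ℕ, (qPochhammer t (k + 1))⁻¹ =
      t ^ (k + 1) * (qPochhammer t (k + 1))⁻¹ + (qPochhammer t k)⁻¹ := by
    intro _ k
    have := one_sub_pow_ne_zero ht k.succ_pos
    rw [qPochhammer_succ]
    field_simp [qPochhammer_ne_zero ht]
    ring
  rw [partitionSum_succ, sum_congr rfl hterm,
    sum_qBinom_mul_of_pascal ht (fun _ k => (qPochhammer t k)⁻¹) hpascal 0 a 1]

end

end QPartition

theorem stmt10_general (p : ℕ) (hp : p.Prime) (a : ℕ) :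
    (∏ j ∈ Icc 1 a, (1 - ((p : ℝ))⁻¹ ^ j)⁻¹) =
      ∑ lam : Nat.Partition a,
        ((p : ℝ))⁻¹ ^ (2 * nstatM lam.parts) /
          ∏ i ∈ lam.parts.toFinset,
            ∏ j ∈ Icc 1 (lam.parts.count i), (1 - ((p : ℝ))⁻¹ ^ j) := by
  have ht : ¬IsOfFinOrder ((p : ℝ)⁻¹) := fun h => by
    obtain ⟨n, hn, h1⟩ := isOfFinOrder_iff_pow_eq_one.mp h
    have : ((p : ℝ)⁻¹) ^ n < 1 :=
      pow_lt_one₀ (by positivity) (inv_lt_one_of_one_lt₀ (by exact_mod_cast hp.one_lt)) hn.ne'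
    exact this.ne h1
  have h := QPartition.partitionSum_one ht a
  simp only [QPartition.partitionSum, QPartition.partitionTerm, Pi.one_apply, one_mul] at h
  rw [prod_inv_distrib]
  exact h.symm

theorem stmt10 (p : ℕ) (hp : p.Prime) (a : ℕ) (ha : 1 ≤ a) :
    (∏ j ∈ Icc 1 a, (1 - ((p : ℝ))⁻¹ ^ j)⁻¹) =
      ∑ lam : Nat.Partition a,
        ((p : ℝ))⁻¹ ^ (2 * nstatM lam.parts) /
          ∏ i ∈ lam.parts.toFinset,
            ∏ j ∈ Icc 1 (lam.parts.count i), (1 - ((p : ℝ))⁻¹ ^ j) :=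
  stmt10_general p hp a
end
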